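/- arXiv:2408.01755 — 5 statements merged into one kernel-verified Lean document; each statement's English description precedes it below -/
import Mathlib

section
/- Let g : I → ℝ be a continuous function on an interval I ⊆ ℝ. Then g is unimodal (has at most two intervals of monotonicity, first increasing then decreasing or first decreasing then increasing) if and only if for every λ ∈ ℝ the function μ ↦ g(μ) − λ has at most 2 sign changes on I, and for all λ for which it has exactly 2 sign changes, the sign pattern (either (−,+,−) or (+,−,+)) is the same for all such λ. -/
/-!
Both conditions say that `g` does not have both a strict peak (`a < b < c` with `g a, g c < g b`)
and a strict valley. On the sign-change side, `g - λ` has the pattern `(-, +, -)` for some `λ`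
exactly when `g` has a strict peak, two sign changes are one of the two patterns and three sign
changes are both of them at the same level. On the unimodality side, a unimodal function misses
peaks or valleys; conversely, if a continuous `g` without strict valleys is neither monotone nor
antitone, an increase `r < s` bounds `g` by `g r` left of `r` and a decrease `t < u` bounds it by
`g u` right of `u`, so a maximum of `g` on `[min r t, max s u]` is a global maximum on `I`, and
`g` increases up to it and decreases after it.
-/

open Set

/-- `f` has at least `n` sign changes on `I`: there are `n+1` increasing points of `I`
on which `f` alternates in sign. -/
def HasSignChangesOn (f : ℝ → ℝ) (I : Set ℝ) (n : ℕ) : Prop :=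
  ∃ x : Fin (n + 1) → ℝ, (∀ i, x i ∈ I) ∧ StrictMono x ∧
    ∀ i : Fin n, f (x i.castSucc) * f (x i.succ) < 0

/-- The sign pattern of `f` on `I` is `(-, +, -)`. -/
def PatternNegPosNegOn (f : ℝ → ℝ) (I : Set ℝ) : Prop :=
  ∃ x : Fin 3 → ℝ, (∀ i, x i ∈ I) ∧ StrictMono x ∧
    f (x 0) < 0 ∧ 0 < f (x 1) ∧ f (x 2) < 0

/-- `g` is unimodal on `I`: at most two intervals of monotonicity. -/
def UnimodalOn (g : ℝ → ℝ) (I : Set ℝ) : Prop :=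
  MonotoneOn g I ∨ AntitoneOn g I ∨
    ∃ μ₀ ∈ I,
      (MonotoneOn g (I ∩ Iic μ₀) ∧ AntitoneOn g (I ∩ Ici μ₀)) ∨
      (AntitoneOn g (I ∩ Iic μ₀) ∧ MonotoneOn g (I ∩ Ici μ₀))

section SignChanges

variable {f : ℝ → ℝ} {I : Set ℝ}

theorem hasSignChangesOn_neg_iff {n : ℕ} : HasSignChangesOn (-f) I n ↔ HasSignChangesOn f I n := by
  simp only [HasSignChangesOn, Pi.neg_apply, neg_mul_neg]

theorem hasSignChangesOn_two_iff :
    HasSignChangesOn f I 2 ↔ PatternNegPosNegOn f I ∨ PatternNegPosNegOn (-f) I := by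
  simp only [HasSignChangesOn, PatternNegPosNegOn, ← exists_or, ← and_or_left]
  refine exists_congr fun x => and_congr_right fun _ => and_congr_right fun _ => ?_
  simp only [Fin.forall_fin_two, Fin.castSucc_zero, Fin.castSucc_one, Fin.succ_zero_eq_one,
    Fin.succ_one_eq_two, Pi.neg_apply, neg_lt_zero, neg_pos, mul_neg_iff]
  constructor
  · rintro ⟨h₁ | h₁, h₂ | h₂⟩ <;> first | tauto | linarith [h₁.2, h₂.1]
  · rintro (h | h) <;> tauto

theorem hasSignChangesOn_three_of_lt {a : ℝ} {y : Fin 3 → ℝ} (ha : a ∈ I) (hyI : ∀ i, y i ∈ I)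
    (hy : StrictMono y) (hay : a < y 0) (hfa : f a < 0) (hfy₀ : 0 < f (y 0)) (hfy₁ : f (y 1) < 0)
    (hfy₂ : 0 < f (y 2)) : HasSignChangesOn f I 3 := by
  refine ⟨![a, y 0, y 1, y 2], ?_, ?_, ?_⟩
  · intro i; fin_cases i <;> simp [ha, hyI]
  · rw [Fin.strictMono_iff_lt_succ]
    intro i; fin_cases i <;> simp [hay, hy.lt_iff_lt]
  · intro i; fin_cases i
    · simpa using mul_neg_of_neg_of_pos hfa hfy₀
    · simpa using mul_neg_of_pos_of_neg hfy₀ hfy₁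
    · simpa using mul_neg_of_neg_of_pos hfy₁ hfy₂

theorem hasSignChangesOn_three_iff :
    HasSignChangesOn f I 3 ↔ PatternNegPosNegOn f I ∧ PatternNegPosNegOn (-f) I := by
  constructor
  · rintro ⟨x, hxI, hx, hsign⟩
    have h01 : f (x 0) * f (x 1) < 0 := hsign 0
    have h12 : f (x 1) * f (x 2) < 0 := hsign 1
    have h23 : f (x 2) * f (x 3) < 0 := hsign 2
    have hinit : ∀ h : ℝ → ℝ, h (x 0) < 0 → 0 < h (x 1) → h (x 2) < 0 → PatternNegPosNegOn h I :=
      fun h h0 h1 h2 =>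
        ⟨x ∘ Fin.castSucc, fun _ => hxI _, hx.comp Fin.strictMono_castSucc, h0, h1, h2⟩
    have htail : ∀ h : ℝ → ℝ, h (x 1) < 0 → 0 < h (x 2) → h (x 3) < 0 → PatternNegPosNegOn h I :=
      fun h h1 h2 h3 => ⟨x ∘ Fin.succ, fun _ => hxI _, hx.comp Fin.strictMono_succ, h1, h2, h3⟩
    rcases mul_neg_iff.1 h12 with ⟨h1, h2⟩ | ⟨h1, h2⟩
    · exact ⟨hinit f (neg_of_mul_neg_left h01 h1.le) h1 h2,
        htail (-f) (neg_neg_of_pos h1) (neg_pos_of_neg h2)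
          (neg_neg_of_pos (pos_of_mul_neg_right h23 h2.le))⟩
    · exact ⟨htail f h1 h2 (neg_of_mul_neg_right h23 h2.le),
        hinit (-f) (neg_neg_of_pos (pos_of_mul_neg_left h01 h1.le)) (neg_pos_of_neg h1)
          (neg_neg_of_pos h2)⟩
  · rintro ⟨⟨x, hxI, hx, hx₀, hx₁, hx₂⟩, ⟨y, hyI, hy, hy₀, hy₁, hy₂⟩⟩
    simp only [Pi.neg_apply, neg_lt_zero, neg_pos] at hy₀ hy₁ hy₂
    rcases (show x 0 ≠ y 0 by rintro h; linarith [h ▸ hx₀]).lt_or_gt with h | h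
    · exact hasSignChangesOn_three_of_lt (hxI 0) hyI hy h hx₀ hy₀ hy₁ hy₂
    · rw [← hasSignChangesOn_neg_iff]
      exact hasSignChangesOn_three_of_lt (hyI 0) hxI hx h (neg_neg_of_pos hy₀) (neg_pos_of_neg hx₀)
        (neg_neg_of_pos hx₁) (neg_pos_of_neg hx₂)

end SignChanges

section Peaks

def HasStrictPeakOn (g : ℝ → ℝ) (I : Set ℝ) : Prop :=
  ∃ a ∈ I, ∃ b ∈ I, ∃ c ∈ I, a < b ∧ b < c ∧ g a < g b ∧ g c < g b

variable {g : ℝ → ℝ} {I : Set ℝ}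

theorem exists_patternNegPosNegOn_sub_iff :
    (∃ l, PatternNegPosNegOn (fun μ => g μ - l) I) ↔ HasStrictPeakOn g I := by
  constructor
  · rintro ⟨l, x, hxI, hx, h₀, h₁, h₂⟩
    exact ⟨x 0, hxI 0, x 1, hxI 1, x 2, hxI 2, hx (by decide), hx (by decide),
      by linarith, by linarith⟩
  · rintro ⟨a, ha, b, hb, c, hc, hab, hbc, hgab, hgcb⟩
    refine ⟨(max (g a) (g c) + g b) / 2, ![a, b, c], ?_, ?_, ?_, ?_, ?_⟩
    · intro i; fin_cases i <;> simpa
    · rw [Fin.strictMono_iff_lt_succ]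
      intro i; fin_cases i <;> simpa
    all_goals simp only [Matrix.cons_val_zero, Matrix.cons_val_one, Matrix.cons_val]
    all_goals linarith [le_max_left (g a) (g c), le_max_right (g a) (g c), max_lt hgab hgcb]

theorem exists_patternNegPosNegOn_neg_sub_iff :
    (∃ l, PatternNegPosNegOn (-fun μ => g μ - l) I) ↔ HasStrictPeakOn (-g) I := by
  rw [← exists_patternNegPosNegOn_sub_iff]
  refine (Equiv.neg ℝ).exists_congr fun l => ?_
  simp only [Equiv.neg_apply, Pi.neg_def, neg_sub, sub_neg_eq_add, neg_add_eq_sub]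

theorem min_le_of_not_hasStrictPeakOn_neg (hv : ¬HasStrictPeakOn (-g) I) {a b c : ℝ} (ha : a ∈ I)
    (hb : b ∈ I) (hc : c ∈ I) (hab : a < b) (hbc : b < c) : min (g a) (g c) ≤ g b := by
  by_contra! h
  exact hv ⟨a, ha, b, hb, c, hc, hab, hbc, neg_lt_neg (lt_min_iff.1 h).1,
    neg_lt_neg (lt_min_iff.1 h).2⟩

theorem monotoneOn_antitoneOn_of_isMaxOn (hv : ¬HasStrictPeakOn (-g) I) {μ₀ : ℝ} (hμ₀ : μ₀ ∈ I)
    (hmax : IsMaxOn g I μ₀) : MonotoneOn g (I ∩ Iic μ₀) ∧ AntitoneOn g (I ∩ Ici μ₀) := by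
  rw [isMaxOn_iff] at hmax
  constructor
  · refine monotoneOn_iff_forall_lt.2 fun x hx y hy hxy => ?_
    rcases (mem_Iic.1 hy.2).lt_or_eq with hyμ | rfl
    · simpa [min_eq_left (hmax x hx.1)] using
        min_le_of_not_hasStrictPeakOn_neg hv hx.1 hy.1 hμ₀ hxy hyμ
    · exact hmax x hx.1
  · refine antitoneOn_iff_forall_lt.2 fun x hx y hy hxy => ?_
    rcases (mem_Ici.1 hx.2).lt_or_eq with hμx | rfl
    · simpa [min_eq_right (hmax y hy.1)] using
        min_le_of_not_hasStrictPeakOn_neg hv hμ₀ hx.1 hy.1 hμx hxy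
    · exact hmax y hy.1

theorem exists_isMaxOn_of_not_hasStrictPeakOn_neg (hI : I.OrdConnected) (hg : ContinuousOn g I)
    (hv : ¬HasStrictPeakOn (-g) I) (hmono : ¬MonotoneOn g I) (hanti : ¬AntitoneOn g I) :
    ∃ μ₀ ∈ I, IsMaxOn g I μ₀ := by
  rw [antitoneOn_iff_forall_lt] at hanti
  rw [monotoneOn_iff_forall_lt] at hmono
  push Not at hanti hmono
  obtain ⟨r, hr, s, hs, hrs, hgrs⟩ := hanti
  obtain ⟨t, ht, u, hu, htu, hgut⟩ := hmono
  have hleft : ∀ x ∈ I, x < r → g x ≤ g r := fun x hx hxr =>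
    (min_le_iff.1 (min_le_of_not_hasStrictPeakOn_neg hv hx hr hs hxr hrs)).resolve_right
      hgrs.not_ge
  have hright : ∀ x ∈ I, u < x → g x ≤ g u := fun x hx hux =>
    (min_le_iff.1 (min_le_of_not_hasStrictPeakOn_neg hv ht hu hx htu hux)).resolve_left
      hgut.not_ge
  have hpq : Icc (min r t) (max s u) ⊆ I := hI.out (min_rec' (· ∈ I) hr ht) (max_rec' (· ∈ I) hs hu)
  obtain ⟨μ₀, hμ₀, hmax⟩ := isCompact_Icc.exists_isMaxOn
    (nonempty_Icc.2 ((min_le_left r t).trans (hrs.le.trans (le_max_left s u)))) (hg.mono hpq)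
  refine ⟨μ₀, hpq hμ₀, fun x hx => ?_⟩
  rcases lt_or_ge x (min r t) with hxp | hpx
  · exact (hleft x hx (hxp.trans_le (min_le_left r t))).trans
      (hmax ⟨min_le_left r t, hrs.le.trans (le_max_left s u)⟩)
  rcases le_or_gt x (max s u) with hxq | hqx
  · exact hmax ⟨hpx, hxq⟩
  · exact (hright x hx ((le_max_right s u).trans_lt hqx)).trans
      (hmax ⟨(min_le_right r t).trans htu.le, le_max_right s u⟩)

theorem unimodalOn_of_not_hasStrictPeakOn_neg (hI : I.OrdConnected) (hg : ContinuousOn g I)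
    (hv : ¬HasStrictPeakOn (-g) I) : UnimodalOn g I := by
  by_cases hmono : MonotoneOn g I
  · exact Or.inl hmono
  by_cases hanti : AntitoneOn g I
  · exact Or.inr (Or.inl hanti)
  obtain ⟨μ₀, hμ₀, hmax⟩ := exists_isMaxOn_of_not_hasStrictPeakOn_neg hI hg hv hmono hanti
  exact Or.inr (Or.inr ⟨μ₀, hμ₀, Or.inl (monotoneOn_antitoneOn_of_isMaxOn hv hμ₀ hmax)⟩)

theorem UnimodalOn.neg (h : UnimodalOn g I) : UnimodalOn (-g) I := by
  rcases h with h | h | ⟨μ₀, hμ₀, ⟨h₁, h₂⟩ | ⟨h₁, h₂⟩⟩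
  · exact Or.inr (Or.inl h.neg)
  · exact Or.inl h.neg
  · exact Or.inr (Or.inr ⟨μ₀, hμ₀, Or.inr ⟨h₁.neg, h₂.neg⟩⟩)
  · exact Or.inr (Or.inr ⟨μ₀, hμ₀, Or.inl ⟨h₁.neg, h₂.neg⟩⟩)

theorem not_hasStrictPeakOn_of_antitoneOn_of_monotoneOn {μ₀ : ℝ} (h₁ : AntitoneOn g (I ∩ Iic μ₀))
    (h₂ : MonotoneOn g (I ∩ Ici μ₀)) : ¬HasStrictPeakOn g I := by
  rintro ⟨a, ha, b, hb, c, hc, hab, hbc, hgab, hgcb⟩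
  rcases le_total b μ₀ with hbμ | hμb
  · exact (h₁ ⟨ha, hab.le.trans hbμ⟩ ⟨hb, hbμ⟩ hab.le).not_gt hgab
  · exact (h₂ ⟨hb, hμb⟩ ⟨hc, hμb.trans hbc.le⟩ hbc.le).not_gt hgcb

theorem UnimodalOn.not_hasStrictPeakOn_or (h : UnimodalOn g I) :
    ¬HasStrictPeakOn g I ∨ ¬HasStrictPeakOn (-g) I := by
  rcases h with h | h | ⟨μ₀, -, ⟨h₁, h₂⟩ | ⟨h₁, h₂⟩⟩
  · exact Or.inl fun ⟨_, _, b, hb, c, hc, _, hbc, _, hgcb⟩ => (h hb hc hbc.le).not_gt hgcb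
  · exact Or.inl fun ⟨a, ha, b, hb, _, _, hab, _, hgab, _⟩ => (h ha hb hab.le).not_gt hgab
  · exact Or.inr (not_hasStrictPeakOn_of_antitoneOn_of_monotoneOn h₁.neg h₂.neg)
  · exact Or.inl (not_hasStrictPeakOn_of_antitoneOn_of_monotoneOn h₁ h₂)

theorem unimodalOn_iff_not_hasStrictPeakOn_or (hI : I.OrdConnected) (hg : ContinuousOn g I) :
    UnimodalOn g I ↔ ¬HasStrictPeakOn g I ∨ ¬HasStrictPeakOn (-g) I := by
  refine ⟨UnimodalOn.not_hasStrictPeakOn_or, fun h => h.elim (fun hp => ?_)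
    (unimodalOn_of_not_hasStrictPeakOn_neg hI hg)⟩
  rw [← neg_neg g]
  exact (unimodalOn_of_not_hasStrictPeakOn_neg hI hg.neg (by rwa [neg_neg])).neg

end Peaks

theorem unimodal_iff_sign_changes (I : Set ℝ) (hI : I.OrdConnected) (g : ℝ → ℝ)
    (hg : ContinuousOn g I) :
    UnimodalOn g I ↔
      ((∀ l : ℝ, ¬ HasSignChangesOn (fun μ => g μ - l) I 3) ∧
        ∀ l l' : ℝ,
          (HasSignChangesOn (fun μ => g μ - l) I 2 ∧
            ¬ HasSignChangesOn (fun μ => g μ - l) I 3) →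
          (HasSignChangesOn (fun μ => g μ - l') I 2 ∧
            ¬ HasSignChangesOn (fun μ => g μ - l') I 3) →
          (PatternNegPosNegOn (fun μ => g μ - l) I ↔
            PatternNegPosNegOn (fun μ => g μ - l') I)) := by
  rw [unimodalOn_iff_not_hasStrictPeakOn_or hI hg, ← exists_patternNegPosNegOn_sub_iff,
    ← exists_patternNegPosNegOn_neg_sub_iff, not_exists, not_exists]
  simp only [hasSignChangesOn_two_iff, hasSignChangesOn_three_iff]
  constructor
  · rintro (hpeak | hvalley)
    · exact ⟨fun l h => hpeak l h.1, fun l l' _ _ => iff_of_false (hpeak l) (hpeak l')⟩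
    · exact ⟨fun l h => hvalley l h.2, fun l l' h h' =>
        iff_of_true (h.1.resolve_right (hvalley l)) (h'.1.resolve_right (hvalley l'))⟩
  · rintro ⟨hthree, hsame⟩
    by_contra! ⟨⟨l', hpeak⟩, ⟨l, hvalley⟩⟩
    -- the valley level `l` inherits the `(-, +, -)` pattern of the peak level `l'`
    exact hthree l ⟨(hsame l l' ⟨Or.inr hvalley, hthree l⟩ ⟨Or.inl hpeak, hthree l'⟩).2 hpeak,
      hvalley⟩
end

section
/- Let 0 < q < 1, let μ₁ < μ₂ be positive reals and i < j be nonnegative integers. Then the 2×2 determinant det( (q^{μ₁};q)ᵢ, (q^{μ₂};q)ᵢ ; (q^{μ₁};q)ⱼ, (q^{μ₂};q)ⱼ ) is strictly positive. -/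
/-- The q-Pochhammer symbol `(a; q)_n = ∏_{k=0}^{n-1} (1 - a q^k)`. -/
def qPoch (a q : ℝ) (n : ℕ) : ℝ := ∏ k ∈ Finset.range n, (1 - a * q ^ k)

/-
For `i < j` and `a < b < 1`, `(a;q)_j / (a;q)_i = ∏_{i ≤ k < j} (1 - a q^k)` is strictly larger than
the same product for `b`, since each factor is positive and strictly decreasing in the base; the
determinant is this difference of tails times the positive factor `(a;q)_i (b;q)_i`.
-/

section qPoch

variable {a b q : ℝ}

lemma one_sub_mul_pow_pos (hb : b < 1) (hq0 : 0 ≤ q) (hq1 : q ≤ 1) (k : ℕ) :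
    0 < 1 - b * q ^ k := by
  have h0 : 0 ≤ q ^ k := pow_nonneg hq0 k
  have h1 : q ^ k ≤ 1 := pow_le_one₀ hq0 hq1
  rcases le_total 0 b with hb0 | hb0 <;> nlinarith

lemma qPoch_pos (hb : b < 1) (hq0 : 0 ≤ q) (hq1 : q ≤ 1) (n : ℕ) : 0 < qPoch b q n :=
  Finset.prod_pos fun k _ => one_sub_mul_pow_pos hb hq0 hq1 k

lemma qPoch_mul_prod_Ico {i j : ℕ} (hij : i ≤ j) :
    qPoch a q i * ∏ k ∈ Finset.Ico i j, (1 - a * q ^ k) = qPoch a q j :=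
  Finset.prod_range_mul_prod_Ico _ hij

lemma prod_Ico_one_sub_mul_pow_lt (hab : a < b) (hb : b < 1) (hq0 : 0 < q) (hq1 : q ≤ 1)
    {i j : ℕ} (hij : i < j) :
    ∏ k ∈ Finset.Ico i j, (1 - b * q ^ k) < ∏ k ∈ Finset.Ico i j, (1 - a * q ^ k) := by
  refine Finset.prod_lt_prod_of_nonempty (fun k _ => one_sub_mul_pow_pos hb hq0.le hq1 k)
    (fun k _ => ?_) (Finset.nonempty_Ico.mpr hij)
  have := mul_lt_mul_of_pos_right hab (pow_pos hq0 k)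
  linarith

lemma qPoch_mul_qPoch_lt (hab : a < b) (hb : b < 1) (hq0 : 0 < q) (hq1 : q ≤ 1)
    {i j : ℕ} (hij : i < j) :
    qPoch a q i * qPoch b q j < qPoch b q i * qPoch a q j := by
  have hai := qPoch_pos (hab.trans hb) hq0.le hq1 i
  have hbi := qPoch_pos hb hq0.le hq1 i
  have htail := prod_Ico_one_sub_mul_pow_lt hab hb hq0 hq1 hij
  rw [← qPoch_mul_prod_Ico (a := a) hij.le, ← qPoch_mul_prod_Ico (a := b) hij.le]
  calc qPoch a q i * (qPoch b q i * ∏ k ∈ Finset.Ico i j, (1 - b * q ^ k))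
      = qPoch a q i * qPoch b q i * ∏ k ∈ Finset.Ico i j, (1 - b * q ^ k) := by ring
    _ < qPoch a q i * qPoch b q i * ∏ k ∈ Finset.Ico i j, (1 - a * q ^ k) := by gcongr
    _ = qPoch b q i * (qPoch a q i * ∏ k ∈ Finset.Ico i j, (1 - a * q ^ k)) := by ring

end qPoch

theorem qPoch_kernel_TP2 (q : ℝ) (hq0 : 0 < q) (hq1 : q < 1)
    (μ₁ μ₂ : ℝ) (hμ0 : 0 < μ₁) (hμ : μ₁ < μ₂) (i j : ℕ) (hij : i < j) :
    0 < qPoch (q ^ μ₁) q i * qPoch (q ^ μ₂) q j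
        - qPoch (q ^ μ₂) q i * qPoch (q ^ μ₁) q j := by
  have hbase : q ^ μ₂ < q ^ μ₁ := Real.rpow_lt_rpow_of_exponent_gt hq0 hq1 hμ
  have hbase_lt_one : q ^ μ₁ < 1 := Real.rpow_lt_one hq0.le hq1 hμ0
  exact sub_pos.mpr (qPoch_mul_qPoch_lt hbase hbase_lt_one hq0 hq1.le hij)
end

section
/- Let 0 < q < 1, let μ₃ > μ₂ > μ₁ > 0 be reals and s > j > i ≥ 1 be positive integers. Then the 3×3 determinant with (r,c) entry 1/(q^{μ_c}; q)_{n_r}, where (n₁,n₂,n₃) = (i,j,s), is strictly negative. -/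
open Set

theorem StrictConvexOn.mul_convexOn {E : Type*} [AddCommGroup E] [Module ℝ E] {s : Set E}
    {f g : E → ℝ} (hf : StrictConvexOn ℝ s f) (hg : ConvexOn ℝ s g)
    (hf₀ : ∀ x ∈ s, 0 ≤ f x) (hg₀ : ∀ x ∈ s, 0 < g x) (hfg : MonovaryOn f g s) :
    StrictConvexOn ℝ s (f * g) := by
  refine ⟨hf.1, fun x hx y hy hxy a b ha hb hab => ?_⟩
  have hz := hf.1 hx hy ha.le hb.le hab
  have hf_lt := hf.2 hx hy hxy ha hb hab
  have hg_le := hg.2 hx hy ha.le hb.le hab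
  have hrearr := hfg.mul_add_mul_le_mul_add_mul hx hy
  have hgx := hg₀ x hx
  have hgy := hg₀ y hy
  simp only [smul_eq_mul, Pi.mul_apply] at hf_lt hg_le ⊢
  obtain rfl : b = 1 - a := by linarith
  calc f (a • x + (1 - a) • y) * g (a • x + (1 - a) • y)
      ≤ f (a • x + (1 - a) • y) * (a * g x + (1 - a) * g y) :=
        mul_le_mul_of_nonneg_left hg_le (hf₀ _ hz)
    _ < (a * f x + (1 - a) * f y) * (a * g x + (1 - a) * g y) :=
        mul_lt_mul_of_pos_right hf_lt (by positivity)
    _ ≤ a * (f x * g x) + (1 - a) * (f y * g y) := by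
        nlinarith [mul_le_mul_of_nonneg_left hrearr (mul_pos ha hb).le]

theorem convexOn_prod_of_monotoneOn {ι : Type*} {s : Set ℝ} (hs : Convex ℝ s) (S : Finset ι)
    {f : ι → ℝ → ℝ} (hconv : ∀ i ∈ S, ConvexOn ℝ s (f i)) (hmono : ∀ i ∈ S, MonotoneOn (f i) s)
    (hnonneg : ∀ i ∈ S, ∀ x ∈ s, 0 ≤ f i x) :
    ConvexOn ℝ s (∏ i ∈ S, f i) ∧ MonotoneOn (∏ i ∈ S, f i) s ∧
      ∀ x ∈ s, 0 ≤ (∏ i ∈ S, f i) x :=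
  Finset.prod_induction f (fun g => ConvexOn ℝ s g ∧ MonotoneOn g s ∧ ∀ x ∈ s, 0 ≤ g x)
    (fun _ _ ⟨hgc, hgm, hg₀⟩ ⟨hhc, hhm, hh₀⟩ => ⟨hgc.mul hhc hg₀ hh₀ (hgm.monovaryOn hhm),
      hgm.mul hhm hg₀ hh₀, fun x hx => mul_nonneg (hg₀ x hx) (hh₀ x hx)⟩)
    ⟨convexOn_const 1 hs, monotoneOn_const, fun _ _ => zero_le_one⟩
    fun i hi => ⟨hconv i hi, hmono i hi, hnonneg i hi⟩

-- `qPoch a q n` is definitionally `qPochFinset a q (Finset.range n)`.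
def qPochFinset (a q : ℝ) (S : Finset ℕ) : ℝ := ∏ k ∈ S, (1 - a * q ^ k)

variable {a q t : ℝ}

theorem qPoch_mul_qPochFinset_Ico {m n : ℕ} (h : m ≤ n) :
    qPoch a q m * qPochFinset a q (Finset.Ico m n) = qPoch a q n :=
  Finset.prod_range_mul_prod_Ico _ h

theorem one_sub_mul_pos_of_lt_one (ha : a < 1) (ht₀ : 0 ≤ t) (ht₁ : t ≤ 1) : 0 < 1 - a * t := by
  rcases le_or_gt a 0 with h | h <;> nlinarith

theorem qPochFinset_pos (ha : a < 1) (hq₀ : 0 ≤ q) (hq₁ : q ≤ 1) (S : Finset ℕ) :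
    0 < qPochFinset a q S :=
  Finset.prod_pos fun k _ => one_sub_mul_pos_of_lt_one ha (pow_nonneg hq₀ k) (pow_le_one₀ hq₀ hq₁)

theorem strictAntiOn_qPochFinset (hq₀ : 0 < q) (hq₁ : q ≤ 1) {S : Finset ℕ} (hS : S.Nonempty) :
    StrictAntiOn (qPochFinset · q S) (Iio 1) := fun _ _ _ hb hab =>
  Finset.prod_lt_prod_of_nonempty
    (fun k _ => one_sub_mul_pos_of_lt_one hb (pow_nonneg hq₀.le k) (pow_le_one₀ hq₀.le hq₁))
    (fun k _ => by have := pow_pos hq₀ k; nlinarith) hS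

theorem convexOn_qPochFinset (hq₀ : 0 ≤ q) (hq₁ : q ≤ 1) (S : Finset ℕ) :
    ConvexOn ℝ (Iio 1) (qPochFinset · q S) := by
  -- after the reflection `a ↦ -a` the factors `1 + a qᵏ` are monotone
  have hrefl : ConvexOn ℝ (Ioi (-1)) (∏ k ∈ S, fun a => 1 + a * q ^ k) := by
    refine (convexOn_prod_of_monotoneOn (convex_Ioi (-1)) S
      (fun k _ => ?_) (fun k _ => ?_) (fun k _ => ?_)).1
    · exact ⟨convex_Ioi _, fun x _ y _ a b _ _ hab => by
        simp only [smul_eq_mul]; linear_combination (-1 : ℝ) * hab⟩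
    · exact fun x _ y _ hxy => by have := pow_nonneg hq₀ k; nlinarith
    · intro x hx
      have := pow_nonneg hq₀ k
      have := pow_le_one₀ hq₀ hq₁ (n := k)
      rw [mem_Ioi] at hx
      nlinarith
  refine ⟨convex_Iio 1, fun x hx y hy a b ha hb hab => ?_⟩
  have hψ (z : ℝ) : (∏ k ∈ S, fun a => 1 + a * q ^ k) (-z) = qPochFinset z q S := by
    simp [Finset.prod_apply, qPochFinset, sub_eq_add_neg]
  have hx' : -x ∈ Ioi (-1 : ℝ) := mem_Ioi.2 (neg_lt_neg hx)
  have hy' : -y ∈ Ioi (-1 : ℝ) := mem_Ioi.2 (neg_lt_neg hy)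
  have := hrefl.2 hx' hy' ha hb hab
  rwa [smul_neg, smul_neg, ← neg_add, hψ, hψ, hψ] at this

theorem strictConvexOn_inv_one_sub_mul (ht₀ : 0 < t) (ht₁ : t ≤ 1) :
    StrictConvexOn ℝ (Iio 1) fun a => (1 - a * t)⁻¹ := by
  have hpos {a : ℝ} (ha : a ∈ Iio 1) := one_sub_mul_pos_of_lt_one ha ht₀.le ht₁
  have slope {x y : ℝ} (hx : x ∈ Iio 1) (hy : y ∈ Iio 1) (hxy : x < y) :
      ((1 - y * t)⁻¹ - (1 - x * t)⁻¹) / (y - x) = t * (1 - x * t)⁻¹ * (1 - y * t)⁻¹ := by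
    rw [inv_sub_inv (hpos hy).ne' (hpos hx).ne', div_div,
      show 1 - x * t - (1 - y * t) = t * (y - x) by ring]
    have := (sub_pos.2 hxy).ne'
    field_simp
  refine strictConvexOn_of_slope_strict_mono_adjacent (convex_Iio 1)
    fun {x y z} hx hz hxy hyz => ?_
  have hy : y ∈ Iio 1 := lt_trans hyz hz
  rw [slope hx hy hxy, slope hy hz hyz]
  have hxz : (1 - x * t)⁻¹ < (1 - z * t)⁻¹ := inv_strictAnti₀ (hpos hz) (by nlinarith)
  have := mul_pos ht₀ (inv_pos.2 (hpos hy))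
  nlinarith

theorem monotoneOn_inv_one_sub_mul (ht₀ : 0 ≤ t) (ht₁ : t ≤ 1) :
    MonotoneOn (fun a => (1 - a * t)⁻¹) (Iio 1) := fun _ _ _ hy hxy =>
  inv_anti₀ (one_sub_mul_pos_of_lt_one hy ht₀ ht₁) (by nlinarith)

theorem monotoneOn_inv_qPochFinset (hq₀ : 0 ≤ q) (hq₁ : q ≤ 1) (S : Finset ℕ) :
    MonotoneOn (fun a => (qPochFinset a q S)⁻¹) (Iio 1) := fun _ _ _ hy hxy =>
  inv_anti₀ (qPochFinset_pos hy hq₀ hq₁ S) <| Finset.prod_le_prod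
    (fun k _ => (one_sub_mul_pos_of_lt_one hy (pow_nonneg hq₀ k) (pow_le_one₀ hq₀ hq₁)).le)
    (fun k _ => by have := pow_nonneg hq₀ k; nlinarith)

theorem strictConvexOn_inv_qPochFinset (hq₀ : 0 < q) (hq₁ : q ≤ 1) {S : Finset ℕ}
    (hS : S.Nonempty) : StrictConvexOn ℝ (Iio 1) fun a => (qPochFinset a q S)⁻¹ := by
  obtain ⟨k, hk⟩ := hS
  have hstrict (m : ℕ) :=
    strictConvexOn_inv_one_sub_mul (pow_pos hq₀ m) (pow_le_one₀ hq₀.le hq₁)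
  have hmono (m : ℕ) := monotoneOn_inv_one_sub_mul (pow_pos hq₀ m).le (pow_le_one₀ hq₀.le hq₁)
  have hpos (m : ℕ) {a : ℝ} (ha : a ∈ Iio 1) :=
    inv_pos.2 (one_sub_mul_pos_of_lt_one ha (pow_pos hq₀ m).le (pow_le_one₀ hq₀.le hq₁))
  obtain ⟨hrest_conv, hrest_mono, -⟩ := convexOn_prod_of_monotoneOn (convex_Iio 1)
    (S.erase k) (fun m _ => (hstrict m).convexOn) (fun m _ => hmono m)
    (fun m _ a ha => (hpos m ha).le)
  have hrest_pos (a : ℝ) (ha : a ∈ Iio 1) : 0 < (∏ m ∈ S.erase k, fun a => (1 - a * q ^ m)⁻¹) a := by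
    rw [Finset.prod_apply]
    exact Finset.prod_pos fun m _ => hpos m ha
  have hsplit : (fun a => (qPochFinset a q S)⁻¹) =
      (fun a => (1 - a * q ^ k)⁻¹) * ∏ m ∈ S.erase k, fun a => (1 - a * q ^ m)⁻¹ := by
    ext a
    simp only [qPochFinset, Pi.mul_apply, Finset.prod_apply, ← Finset.prod_inv_distrib]
    exact (Finset.mul_prod_erase S _ hk).symm
  rw [hsplit]
  exact (hstrict k).mul_convexOn hrest_conv (fun a ha => (hpos k ha).le) hrest_pos
    ((hmono k).monovaryOn hrest_mono)

theorem det_lt_zero_of_convexOn_of_strictConvexOn {s : Set ℝ} {φ C : ℝ → ℝ}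
    (hφ : ConvexOn ℝ s φ) (hφ' : StrictAntiOn φ s) (hC : StrictConvexOn ℝ s C)
    (hC' : MonotoneOn C s) {u v w : ℝ} (hu : u ∈ s) (hv : v ∈ s) (hw : w ∈ s)
    (hwv : w < v) (hvu : v < u) :
    Matrix.det !![φ u, φ v, φ w; 1, 1, 1; C u, C v, C w] < 0 := by
  have hφslope := hφ.slope_mono_adjacent hw hu hwv hvu
  have hCslope := hC.slope_strict_mono_adjacent hw hu hwv hvu
  have hd₁ : 0 < v - w := sub_pos.2 hwv
  have hd₂ : 0 < u - v := sub_pos.2 hvu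
  rw [div_le_div_iff₀ hd₁ hd₂] at hφslope
  rw [div_lt_div_iff₀ hd₁ hd₂] at hCslope
  have hφwv : 0 < φ w - φ v := sub_pos.2 (hφ' hw hv hwv)
  have hCwv : 0 ≤ C v - C w := sub_nonneg.2 (hC' hw hv hwv.le)
  simp only [Matrix.det_fin_three, Matrix.of_apply, Matrix.cons_val', Matrix.cons_val_zero,
    Matrix.cons_val_fin_one, Matrix.cons_val_one, Matrix.cons_val, mul_one]
  nlinarith [mul_pos hd₁ hd₂, mul_le_mul_of_nonneg_right hφslope (mul_nonneg hCwv hd₂.le),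
    mul_lt_mul_of_pos_left hCslope (mul_pos hφwv hd₁)]

theorem inv_qPoch_kernel_det3_neg_general (q : ℝ) (hq0 : 0 < q) (hq1 : q < 1)
    (μ₁ μ₂ μ₃ : ℝ) (hμ0 : 0 < μ₁) (hμ12 : μ₁ < μ₂) (hμ23 : μ₂ < μ₃)
    (i j s : ℕ) (hij : i < j) (hjs : j < s) :
    Matrix.det
        !![(qPoch (q ^ μ₁) q i)⁻¹, (qPoch (q ^ μ₂) q i)⁻¹, (qPoch (q ^ μ₃) q i)⁻¹;
           (qPoch (q ^ μ₁) q j)⁻¹, (qPoch (q ^ μ₂) q j)⁻¹, (qPoch (q ^ μ₃) q j)⁻¹;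
           (qPoch (q ^ μ₁) q s)⁻¹, (qPoch (q ^ μ₂) q s)⁻¹, (qPoch (q ^ μ₃) q s)⁻¹] < 0 := by
  have hu : q ^ μ₁ < 1 := Real.rpow_lt_one hq0.le hq1 hμ0
  have hvu : q ^ μ₂ < q ^ μ₁ := Real.rpow_lt_rpow_of_exponent_gt hq0 hq1 hμ12
  have hwv : q ^ μ₃ < q ^ μ₂ := Real.rpow_lt_rpow_of_exponent_gt hq0 hq1 hμ23
  have hv := hvu.trans hu
  have hw := hwv.trans hv
  set φ := (qPochFinset · q (Finset.Ico i j))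
  set C := fun a => (qPochFinset a q (Finset.Ico j s))⁻¹
  set P := fun a => (qPoch a q j)⁻¹
  have hP {a : ℝ} (ha : a < 1) : 0 < P a := inv_pos.2 (qPochFinset_pos ha hq0.le hq1.le _)
  have row₁ {a : ℝ} (ha : a < 1) : (qPoch a q i)⁻¹ = P a * φ a := by
    simp only [P, φ]
    rw [← qPoch_mul_qPochFinset_Ico hij.le, mul_inv,
      inv_mul_cancel_right₀ (qPochFinset_pos ha hq0.le hq1.le _).ne']
  have row₃ (a : ℝ) : (qPoch a q s)⁻¹ = P a * C a := by
    simp only [P, C]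
    rw [← qPoch_mul_qPochFinset_Ico hjs.le, mul_inv]
  have hmatrix : !![(qPoch (q ^ μ₁) q i)⁻¹, (qPoch (q ^ μ₂) q i)⁻¹, (qPoch (q ^ μ₃) q i)⁻¹;
      (qPoch (q ^ μ₁) q j)⁻¹, (qPoch (q ^ μ₂) q j)⁻¹, (qPoch (q ^ μ₃) q j)⁻¹;
      (qPoch (q ^ μ₁) q s)⁻¹, (qPoch (q ^ μ₂) q s)⁻¹, (qPoch (q ^ μ₃) q s)⁻¹] =
      Matrix.of fun r c => ![P (q ^ μ₁), P (q ^ μ₂), P (q ^ μ₃)] c *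
        !![φ (q ^ μ₁), φ (q ^ μ₂), φ (q ^ μ₃); 1, 1, 1; C (q ^ μ₁), C (q ^ μ₂), C (q ^ μ₃)] r c := by
    ext r c
    fin_cases r <;> fin_cases c <;> simp [row₁, row₃, hu, hv, hw, P]
  rw [hmatrix, Matrix.det_mul_row, Fin.prod_univ_three]
  refine mul_neg_of_pos_of_neg (by simpa using mul_pos (mul_pos (hP hu) (hP hv)) (hP hw)) ?_
  exact det_lt_zero_of_convexOn_of_strictConvexOn (convexOn_qPochFinset hq0.le hq1.le _)
    (strictAntiOn_qPochFinset hq0 hq1.le (Finset.nonempty_Ico.2 hij))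
    (strictConvexOn_inv_qPochFinset hq0 hq1.le (Finset.nonempty_Ico.2 hjs))
    (monotoneOn_inv_qPochFinset hq0.le hq1.le _) hu hv hw hwv hvu

theorem inv_qPoch_kernel_det3_neg (q : ℝ) (hq0 : 0 < q) (hq1 : q < 1)
    (μ₁ μ₂ μ₃ : ℝ) (hμ0 : 0 < μ₁) (hμ12 : μ₁ < μ₂) (hμ23 : μ₂ < μ₃)
    (i j s : ℕ) (hi : 1 ≤ i) (hij : i < j) (hjs : j < s) :
    Matrix.det
        !![(qPoch (q ^ μ₁) q i)⁻¹, (qPoch (q ^ μ₂) q i)⁻¹, (qPoch (q ^ μ₃) q i)⁻¹;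
           (qPoch (q ^ μ₁) q j)⁻¹, (qPoch (q ^ μ₂) q j)⁻¹, (qPoch (q ^ μ₃) q j)⁻¹;
           (qPoch (q ^ μ₁) q s)⁻¹, (qPoch (q ^ μ₂) q s)⁻¹, (qPoch (q ^ μ₃) q s)⁻¹] < 0 :=
  inv_qPoch_kernel_det3_neg_general q hq0 hq1 μ₁ μ₂ μ₃ hμ0 hμ12 hμ23 i j s hij hjs
end

section
/- The kernel K(x,y) = x^y is strictly totally positive of every order on (0,∞) × ℝ: for any m ≥ 1, any 0 < x₁ < x₂ < ... < xₘ and any real y₁ < y₂ < ... < yₘ, the determinant det(xᵢ^{yⱼ})_{i,j=1}^m is strictly positive. -/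
/-!
A nonzero generalized polynomial `∑ j, c j * t ^ y j` with distinct real exponents has fewer than
`m` positive zeros: divide by `t ^ y 0` and differentiate, so that Rolle's theorem passes from `m`
zeros of the sum to `m - 1` zeros of a sum with one exponent fewer. Hence `det (x i ^ y j)` never
vanishes. As `y` moves along a segment inside the convex set of strictly increasing exponent vectors
towards `(0, 1, …, m - 1)`, the determinant changes continuously without vanishing, and at the end
it is a Vandermonde determinant, which is positive.
-/

open Set

theorem exists_strictMono_deriv_eq_zero {m : ℕ} {f f' : ℝ → ℝ} {s : Set ℝ} (hs : s.OrdConnected)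
    (hf : ∀ t ∈ s, HasDerivAt f (f' t) t) {z : Fin (m + 1) → ℝ} (hz : StrictMono z)
    (hzs : ∀ i, z i ∈ s) (hfz : ∀ i, f (z i) = 0) :
    ∃ w : Fin m → ℝ, StrictMono w ∧ (∀ i, w i ∈ s) ∧ ∀ i, f' (w i) = 0 := by
  have hIcc (i : Fin m) : Icc (z i.castSucc) (z i.succ) ⊆ s := hs.out (hzs _) (hzs _)
  have hrolle (i : Fin m) : ∃ w ∈ Ioo (z i.castSucc) (z i.succ), f' w = 0 :=
    exists_hasDerivAt_eq_zero (hz Fin.castSucc_lt_succ)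
      (fun t ht => (hf t (hIcc i ht)).continuousAt.continuousWithinAt) (by rw [hfz, hfz])
      (fun t ht => hf t (hIcc i (Ioo_subset_Icc_self ht)))
  choose w hw hw0 using hrolle
  refine ⟨w, fun i j hij => ?_, fun i => hIcc i (Ioo_subset_Icc_self (hw i)), hw0⟩
  calc w i < z i.succ := (hw i).2
    _ ≤ z j.castSucc := hz.monotone (Fin.succ_le_castSucc_iff.mpr hij)
    _ < w j := (hw j).1

theorem eq_zero_of_sum_mul_rpow_eq_zero {m : ℕ} {c y z : Fin m → ℝ} (hy : Function.Injective y)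
    (hz : StrictMono z) (hz0 : ∀ i, 0 < z i) (hc : ∀ i, ∑ j, c j * z i ^ y j = 0) : c = 0 := by
  induction m with
  | zero => exact Subsingleton.elim _ _
  | succ m ih =>
    set e : Fin (m + 1) → ℝ := fun j => y j - y 0
    have hf (t : ℝ) (ht : t ∈ Ioi 0) : HasDerivAt (fun t => ∑ j, c j * t ^ e j)
        (∑ j, c j * (e j * t ^ (e j - 1))) t :=
      HasDerivAt.fun_sum fun j _ => (Real.hasDerivAt_rpow_const (Or.inl (ne_of_gt ht))).const_mul _
    have hfz (i : Fin (m + 1)) : ∑ j, c j * z i ^ e j = 0 := by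
      simp only [e, Real.rpow_sub (hz0 i), mul_div_assoc', ← Finset.sum_div, hc i, zero_div]
    obtain ⟨w, hw, hw0, hf'w⟩ :=
      exists_strictMono_deriv_eq_zero ordConnected_Ioi hf hz hz0 hfz
    have hsucc : (fun j : Fin m => c j.succ * e j.succ) = 0 := by
      refine ih (y := fun j => e j.succ - 1) (fun a b hab => ?_) hw hw0 fun i => ?_
      · exact Fin.succ_injective _ (hy (by simpa [e] using hab))
      · simpa [Fin.sum_univ_succ, e, mul_assoc] using hf'w i
    have hc_succ (j : Fin m) : c j.succ = 0 := by
      have hej : e j.succ ≠ 0 := sub_ne_zero.mpr (hy.ne (Fin.succ_ne_zero j))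
      simpa [hej] using congrFun hsucc j
    have hc_zero : c 0 = 0 := by
      have h0 := hc 0
      simp only [Fin.sum_univ_succ, hc_succ, zero_mul, Finset.sum_const_zero, add_zero] at h0
      exact (mul_eq_zero.mp h0).resolve_right (Real.rpow_pos_of_pos (hz0 0) _).ne'
    funext j
    cases j using Fin.cases with
    | zero => exact hc_zero
    | succ j => exact hc_succ j

theorem Matrix.det_of_rpow_ne_zero {m : ℕ} {x y : Fin m → ℝ} (hx0 : ∀ i, 0 < x i)
    (hx : StrictMono x) (hy : Function.Injective y) :
    (Matrix.of fun i j => x i ^ y j).det ≠ 0 := by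
  intro hdet
  obtain ⟨v, hv, hmv⟩ := Matrix.exists_mulVec_eq_zero_iff.mpr hdet
  refine hv (eq_zero_of_sum_mul_rpow_eq_zero hy hx hx0 fun i => ?_)
  simpa [Matrix.mulVec, dotProduct, mul_comm] using congrFun hmv i

theorem Matrix.det_of_rpow_natCast_pos {m : ℕ} {x : Fin m → ℝ} (hx : StrictMono x) :
    0 < (Matrix.of fun i (j : Fin m) => x i ^ (j : ℝ)).det := by
  have hvdm : (Matrix.of fun i (j : Fin m) => x i ^ (j : ℝ)) = Matrix.vandermonde x := by
    ext i j
    simp [Matrix.vandermonde_apply, Real.rpow_natCast]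
  rw [hvdm, Matrix.det_vandermonde]
  exact Finset.prod_pos fun i _ => Finset.prod_pos fun j hj =>
    sub_pos.mpr (hx (Finset.mem_Ioi.mp hj))

theorem convex_setOf_strictMono {ι : Type*} [Preorder ι] :
    Convex ℝ {f : ι → ℝ | StrictMono f} := by
  intro f hf g hg a b ha hb hab i j hij
  have hfij := hf hij
  have hgij := hg hij
  simp only [Pi.add_apply, Pi.smul_apply, smul_eq_mul]
  rcases le_total (f j - f i) (g j - g i) with h | h <;> nlinarith

theorem power_kernel_STP_general (m : ℕ) (x y : Fin m → ℝ)
    (hx0 : ∀ i, 0 < x i) (hx : StrictMono x) (hy : StrictMono y) :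
    0 < Matrix.det (Matrix.of fun i j : Fin m => (x i) ^ (y j)) := by
  set D : (Fin m → ℝ) → ℝ := fun y => (Matrix.of fun i j => x i ^ y j).det
  have hD : Continuous D := Continuous.matrix_det <| continuous_pi fun i => continuous_pi fun j =>
    (Real.continuous_const_rpow (hx0 i).ne').comp (continuous_apply j)
  have hnat : StrictMono (fun j : Fin m => (j : ℝ)) := fun _ _ h => by simpa using h
  by_contra! hneg
  obtain ⟨y', hy', hy'0⟩ := convex_setOf_strictMono.isPreconnected.intermediate_value hy hnat
    hD.continuousOn ⟨hneg, (Matrix.det_of_rpow_natCast_pos hx).le⟩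
  exact Matrix.det_of_rpow_ne_zero hx0 hx hy'.injective hy'0

theorem power_kernel_STP (m : ℕ) (hm : 1 ≤ m) (x y : Fin m → ℝ)
    (hx0 : ∀ i, 0 < x i) (hx : StrictMono x) (hy : StrictMono y) :
    0 < Matrix.det (Matrix.of fun i j : Fin m => (x i) ^ (y j)) :=
  power_kernel_STP_general m x y hx0 hx hy
end

section
/- For integers 0 ≤ n₁ < n₂ and reals 0 < x₁ < x₂, the determinant det( 1/(x₁)_{n₁}, 1/(x₂)_{n₁} ; 1/(x₁)_{n₂}, 1/(x₂)_{n₂} ) is strictly negative; i.e. the reciprocal Pochhammer kernel 1/(x)ₙ is strictly reverse-rule of order 2 on ℕ₀ × (0,∞). -/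
/-! The ratio `(x)_{n₂} / (x)_{n₁} = (x + n₁) ⋯ (x + n₂ - 1)` is a nonempty product of positive
factors that each increase with `x`, so cross-multiplying the two columns of the determinant
compares these ratios at `x₁ < x₂`. -/

/-- The Pochhammer symbol `(x)_n = x (x+1) ⋯ (x+n-1)`, with `(x)_0 = 1`. -/
def poch (x : ℝ) (n : ℕ) : ℝ := ∏ k ∈ Finset.range n, (x + k)

lemma poch_pos {x : ℝ} (hx : 0 < x) (n : ℕ) : 0 < poch x n :=
  Finset.prod_pos fun _ _ => by positivity

lemma poch_mul_prod_Ico (x : ℝ) {m n : ℕ} (hmn : m ≤ n) :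
    poch x m * ∏ k ∈ Finset.Ico m n, (x + k) = poch x n :=
  Finset.prod_range_mul_prod_Ico _ hmn

lemma prod_Ico_lt_prod_Ico {x₁ x₂ : ℝ} (hx0 : 0 < x₁) (hx : x₁ < x₂) {m n : ℕ} (hmn : m < n) :
    ∏ k ∈ Finset.Ico m n, (x₁ + k) < ∏ k ∈ Finset.Ico m n, (x₂ + k) :=
  Finset.prod_lt_prod_of_nonempty (fun _ _ => by positivity) (fun _ _ => by linarith)
    (Finset.nonempty_Ico.mpr hmn)

lemma poch_mul_poch_lt {x₁ x₂ : ℝ} (hx0 : 0 < x₁) (hx : x₁ < x₂) {m n : ℕ} (hmn : m < n) :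
    poch x₂ m * poch x₁ n < poch x₁ m * poch x₂ n := by
  have hprod_pos : 0 < poch x₁ m * poch x₂ m := mul_pos (poch_pos hx0 m) (poch_pos (hx0.trans hx) m)
  calc poch x₂ m * poch x₁ n
      = poch x₁ m * poch x₂ m * ∏ k ∈ Finset.Ico m n, (x₁ + k) := by
        rw [← poch_mul_prod_Ico x₁ hmn.le]; ring
    _ < poch x₁ m * poch x₂ m * ∏ k ∈ Finset.Ico m n, (x₂ + k) :=
        mul_lt_mul_of_pos_left (prod_Ico_lt_prod_Ico hx0 hx hmn) hprod_pos
    _ = poch x₁ m * poch x₂ n := by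
        rw [← poch_mul_prod_Ico x₂ hmn.le]; ring

theorem inv_pochhammer_kernel_RR2 (n₁ n₂ : ℕ) (hn : n₁ < n₂) (x₁ x₂ : ℝ)
    (hx0 : 0 < x₁) (hx : x₁ < x₂) :
    (poch x₁ n₁)⁻¹ * (poch x₂ n₂)⁻¹ - (poch x₂ n₁)⁻¹ * (poch x₁ n₂)⁻¹ < 0 := by
  have hx20 : 0 < x₂ := hx0.trans hx
  rw [← mul_inv, ← mul_inv, sub_neg]
  exact inv_strictAnti₀ (mul_pos (poch_pos hx20 n₁) (poch_pos hx0 n₂))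
    (poch_mul_poch_lt hx0 hx hn)
end
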